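/- Let p and q be projections in a *-reducing ring R such that 1 - pq is Moore-Penrose invertible. Then (1 - ((1-q)p)†)R = ((1-p)R ∩ (1-q)R) + qR, and moreover this sum is orthogonal: y*x = 0 for every x ∈ (1-p)R ∩ (1-q)R and y ∈ qR. -/

import Mathlib

/-!
With `a = (1 - q) p` and `d = a†`, both sides of the equality are the right annihilator of
`a* = p (1 - q)`. For the sum this is a computation with the idempotents `p` and `q`. For `(1 - d)R`
it rests on the identities `d = a* d* d = d d* a*` and `a* = a* a d`: the first one gives
`d x = 0` whenever `a* x = 0`, and, since `p a* = a*` and `a* a = a* p`, the second one gives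
`a* d = a* p d = a* a d = a*`.
-/

variable {R : Type*} [Ring R] [StarRing R]

/-- `b` is a Moore-Penrose inverse of `a`. -/
def IsMP (a b : R) : Prop :=
  a * b * a = a ∧ b * a * b = b ∧ star (a * b) = a * b ∧ star (b * a) = b * a

/-- `p` is a projection: self-adjoint idempotent. -/
def IsProj (p : R) : Prop := p * p = p ∧ star p = p

/-- The right ideal `aR`. -/
def rid (a : R) : Set R := {x | ∃ r, x = a * r}

/-- Elementwise sum of two subsets. -/
def sid (A B : Set R) : Set R := {z | ∃ x ∈ A, ∃ y ∈ B, z = x + y}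

section Idempotent

variable {S : Type*} [Ring S] {p q x : S}

theorem mem_rid_one_sub_iff (hp : IsIdempotentElem p) : x ∈ rid (1 - p) ↔ p * x = 0 := by
  constructor
  · rintro ⟨r, rfl⟩
    rw [← mul_assoc, hp.mul_one_sub_self, zero_mul]
  · intro hx
    exact ⟨x, by rw [sub_mul, one_mul, hx, sub_zero]⟩

theorem sid_inter_rid_eq (hp : IsIdempotentElem p) (hq : IsIdempotentElem q) :
    sid (rid (1 - p) ∩ rid (1 - q)) (rid q) = {x | p * (1 - q) * x = 0} := by
  ext x
  constructor
  · rintro ⟨u, ⟨hup, huq⟩, v, ⟨w, rfl⟩, rfl⟩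
    rw [mem_rid_one_sub_iff hp] at hup
    rw [mem_rid_one_sub_iff hq] at huq
    have hqu : (1 - q) * (u + q * w) = u := by
      rw [mul_add, ← mul_assoc, hq.one_sub_mul_self, zero_mul, add_zero, sub_mul, one_mul, huq,
        sub_zero]
    rw [Set.mem_ofPred_eq, mul_assoc, hqu, hup]
  · intro hx
    refine ⟨(1 - q) * x, ⟨?_, x, rfl⟩, q * x, ⟨x, rfl⟩, by noncomm_ring⟩
    rw [mem_rid_one_sub_iff hp, ← mul_assoc, hx]

end Idempotent

variable {a b p q x y : R}

namespace IsMP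

theorem star_mul_mul_eq (h : IsMP a b) : star a * a * b = star a := by
  conv_rhs => rw [← h.1, star_mul, h.2.2.1, ← mul_assoc]

theorem eq_star_mul_star_mul (h : IsMP a b) : b = star a * star b * b := by
  conv_lhs => rw [← h.2.1, ← h.2.2.2, star_mul]

theorem eq_mul_star_mul_star (h : IsMP a b) : b = b * star b * star a := by
  conv_lhs => rw [← h.2.1, mul_assoc, ← h.2.2.1, star_mul, ← mul_assoc]

theorem mul_eq_zero_of_star_mul_eq_zero (h : IsMP a b) (hx : star a * x = 0) : b * x = 0 := by
  rw [h.eq_mul_star_mul_star, mul_assoc, hx, mul_zero]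

theorem mul_eq_self_of_mul_star_eq (h : IsMP a b) (hp : p * star a = star a) : p * b = b := by
  conv_lhs => rw [h.eq_star_mul_star_mul, ← mul_assoc, ← mul_assoc, hp]
  exact h.eq_star_mul_star_mul.symm

theorem star_mul_eq_star (h : IsMP a b) (hp : p * star a = star a)
    (hap : star a * a = star a * p) : star a * b = star a := by
  conv_lhs => rw [← h.mul_eq_self_of_mul_star_eq hp, ← mul_assoc, ← hap, h.star_mul_mul_eq]

theorem star_mul_eq_star_of_isStarProjection (hp : IsStarProjection p) (hq : IsStarProjection q)
    (h : IsMP (q * p) b) : star (q * p) * b = star (q * p) := by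
  have hstar : star (q * p) = p * q := by
    rw [star_mul, hp.isSelfAdjoint.star_eq, hq.isSelfAdjoint.star_eq]
  refine h.star_mul_eq_star (p := p) ?_ ?_ <;> rw [hstar]
  · rw [← mul_assoc, hp.isIdempotentElem.eq]
  · rw [mul_assoc, ← mul_assoc q, hq.isIdempotentElem.eq, mul_assoc]

theorem rid_one_sub_eq (h : IsMP a b) (hab : star a * b = star a) :
    rid (1 - b) = {x | star a * x = 0} := by
  ext x
  constructor
  · rintro ⟨r, rfl⟩
    rw [Set.mem_ofPred_eq, ← mul_assoc, mul_sub, mul_one, hab, sub_self, zero_mul]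
  · intro hx
    exact ⟨x, by rw [sub_mul, one_mul, h.mul_eq_zero_of_star_mul_eq_zero hx, sub_zero]⟩

end IsMP

theorem star_mul_eq_zero_of_mem_rid (hq : IsStarProjection q) (hx : x ∈ rid (1 - q))
    (hy : y ∈ rid q) : star y * x = 0 := by
  obtain ⟨r, rfl⟩ := hx
  obtain ⟨s, rfl⟩ := hy
  rw [star_mul, hq.isSelfAdjoint.star_eq, mul_assoc, ← mul_assoc q,
    hq.isIdempotentElem.mul_one_sub_self, zero_mul, mul_zero]

theorem stmt14_general
    (p q d : R) (hp : IsProj p) (hq : IsProj q)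
    (hd : IsMP ((1 - q) * p) d) :
    rid (1 - d) = sid (rid (1 - p) ∩ rid (1 - q)) (rid q) ∧
    (∀ x ∈ rid (1 - p) ∩ rid (1 - q), ∀ y ∈ rid q, star y * x = 0) := by
  have hp' : IsStarProjection p := ⟨hp.1, hp.2⟩
  have hq' : IsStarProjection q := ⟨hq.1, hq.2⟩
  have hstar : star ((1 - q) * p) = p * (1 - q) := by
    rw [star_mul, hp'.isSelfAdjoint.star_eq, hq'.one_sub.isSelfAdjoint.star_eq]
  refine ⟨?_, fun x hx y hy => star_mul_eq_zero_of_mem_rid hq' hx.2 hy⟩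
  rw [hd.rid_one_sub_eq (hd.star_mul_eq_star_of_isStarProjection hp' hq'.one_sub), hstar,
    sid_inter_rid_eq hp.1 hq.1]

theorem stmt14 (hred : ∀ a : R, star a * a = 0 → a = 0)
    (p q c d : R) (hp : IsProj p) (hq : IsProj q)
    (hc : IsMP (1 - p * q) c) (hd : IsMP ((1 - q) * p) d) :
    rid (1 - d) = sid (rid (1 - p) ∩ rid (1 - q)) (rid q) ∧
    (∀ x ∈ rid (1 - p) ∩ rid (1 - q), ∀ y ∈ rid q, star y * x = 0) :=
  stmt14_general p q d hp hq hd
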